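/- arXiv:2507.03756 — 3 statements merged into one kernel-verified Lean document; each statement's English description precedes it below -/
import Mathlib

section
/- For every dataset S = (x₁,…,x_N) ∈ (ℝ^d)^N and every score function s, the empirical denoising score matching loss and the empirical score matching loss satisfy, as an identity in [0,∞], ℓ̂_dsm(s;S,τ) = ℓ̂_sm(s;S,τ) + Ĉ_sm(S,τ). -/
open MeasureTheory Real ENNReal

noncomputable section

/-- Euclidean space `ℝ^d`. -/
abbrev Euc (d : ℕ) : Type := EuclideanSpace ℝ (Fin d)

/-- The variance `σ_t²` of the forward OU transition kernel. -/
def sigSq (α t : ℝ) : ℝ := if 0 < α then (1 - Real.exp (-(2 * α * t))) / α else 2 * t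

/-- The mean contraction `μ_t = e^{-αt}` of the forward OU transition kernel. -/
def muOU (α t : ℝ) : ℝ := Real.exp (-(α * t))

/-- The forward Ornstein–Uhlenbeck transition density `φ_t(y|x)`,
the density of `N(μ_t x, σ_t² I_d)` at `y`. -/
def ouKernel (d : ℕ) (α t : ℝ) (x y : Euc d) : ℝ :=
  (2 * Real.pi * sigSq α t) ^ (-(d : ℝ) / 2) *
    Real.exp (-‖y - muOU α t • x‖ ^ 2 / (2 * sigSq α t))

/-- The conditional score `∇_y log φ_t(y|x) = (μ_t x - y)/σ_t²`. -/
def condScore (d : ℕ) (α t : ℝ) (x y : Euc d) : Euc d :=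
  (sigSq α t)⁻¹ • (muOU α t • x - y)

/-- Empirical density `p̂_t(y) = N⁻¹ ∑ φ_t(y|x_i)`. -/
def empDens (d N : ℕ) (α : ℝ) (S : Fin N → Euc d) (t : ℝ) (y : Euc d) : ℝ :=
  (N : ℝ)⁻¹ * ∑ i, ouKernel d α t (S i) y

/-- Empirical score function `ŝ*(y,t) = ∇_y log p̂_t(y)`. -/
def empScore (d N : ℕ) (α : ℝ) (S : Fin N → Euc d) (t : ℝ) (y : Euc d) : Euc d :=
  gradient (fun z => Real.log (empDens d N α S t z)) y

/-- Empirical denoising score matching loss `ℓ̂_dsm(s; S, τ)`, valued in `[0,∞]`. -/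
def empDSM (d N : ℕ) (α : ℝ) (τ : Measure ℝ) (s : Euc d → ℝ → Euc d)
    (S : Fin N → Euc d) : ℝ≥0∞ :=
  (N : ℝ≥0∞)⁻¹ * ∑ i, ∫⁻ t, ∫⁻ y,
    ENNReal.ofReal (‖s y t - condScore d α t (S i) y‖ ^ 2 * ouKernel d α t (S i) y)
      ∂volume ∂τ

/-- Empirical score matching loss `ℓ̂_sm(s; S, τ)`, valued in `[0,∞]`. -/
def empSM (d N : ℕ) (α : ℝ) (τ : Measure ℝ) (s : Euc d → ℝ → Euc d)
    (S : Fin N → Euc d) : ℝ≥0∞ :=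
  ∫⁻ t, ∫⁻ y,
    ENNReal.ofReal (‖s y t - empScore d N α S t y‖ ^ 2 * empDens d N α S t y) ∂volume ∂τ

/-- Empirical posterior mean `m̂_{1,t}(y)`. -/
def empM1 (d N : ℕ) (α : ℝ) (S : Fin N → Euc d) (t : ℝ) (y : Euc d) : Euc d :=
  (∑ i, ouKernel d α t (S i) y)⁻¹ • ∑ i, ouKernel d α t (S i) y • S i

/-- Empirical posterior second moment `m̂_{2,t}(y)`. -/
def empM2 (d N : ℕ) (α : ℝ) (S : Fin N → Euc d) (t : ℝ) (y : Euc d) : ℝ :=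
  (∑ i, ouKernel d α t (S i) y)⁻¹ * ∑ i, ouKernel d α t (S i) y * ‖S i‖ ^ 2

/-- The empirical constant `Ĉ_sm(S,τ)` separating `ℓ̂_dsm` and `ℓ̂_sm`. -/
def empCsm (d N : ℕ) (α : ℝ) (τ : Measure ℝ) (S : Fin N → Euc d) : ℝ≥0∞ :=
  ∫⁻ t, (ENNReal.ofReal (muOU α t ^ 2 / sigSq α t ^ 2) *
    ∫⁻ y, ENNReal.ofReal ((empM2 d N α S t y - ‖empM1 d N α S t y‖ ^ 2) *
      empDens d N α S t y) ∂volume) ∂τ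

/-- Population density `p_t(y) = ∫ φ_t(y|x) ν(dx)`. -/
def popDens (d : ℕ) (α : ℝ) (ν : Measure (Euc d)) (t : ℝ) (y : Euc d) : ℝ :=
  ∫ x, ouKernel d α t x y ∂ν

/-- Population score function `s*(y,t) = ∇_y log p_t(y)`. -/
def popScore (d : ℕ) (α : ℝ) (ν : Measure (Euc d)) (t : ℝ) (y : Euc d) : Euc d :=
  gradient (fun z => Real.log (popDens d α ν t z)) y

/-- Population denoising score matching loss `ℓ_dsm(s; τ)`, valued in `[0,∞]`. -/
def popDSM (d : ℕ) (α : ℝ) (τ : Measure ℝ) (ν : Measure (Euc d))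
    (s : Euc d → ℝ → Euc d) : ℝ≥0∞ :=
  ∫⁻ t, ∫⁻ x, ∫⁻ y,
    ENNReal.ofReal (‖s y t - condScore d α t x y‖ ^ 2 * ouKernel d α t x y) ∂volume ∂ν ∂τ

/-- Population score matching loss `ℓ_sm(s; τ)`, valued in `[0,∞]`. -/
def popSM (d : ℕ) (α : ℝ) (τ : Measure ℝ) (ν : Measure (Euc d))
    (s : Euc d → ℝ → Euc d) : ℝ≥0∞ :=
  ∫⁻ t, ∫⁻ y,
    ENNReal.ofReal (‖s y t - popScore d α ν t y‖ ^ 2 * popDens d α ν t y) ∂volume ∂τ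

/-- Population posterior mean `m_{1,t}(y)`. -/
def popM1 (d : ℕ) (α : ℝ) (ν : Measure (Euc d)) (t : ℝ) (y : Euc d) : Euc d :=
  (popDens d α ν t y)⁻¹ • ∫ x, ouKernel d α t x y • x ∂ν

/-- Population posterior second moment `m_{2,t}(y)`. -/
def popM2 (d : ℕ) (α : ℝ) (ν : Measure (Euc d)) (t : ℝ) (y : Euc d) : ℝ :=
  (popDens d α ν t y)⁻¹ * ∫ x, ouKernel d α t x y * ‖x‖ ^ 2 ∂ν

/-- The population constant `C_sm` separating `ℓ_dsm` and `ℓ_sm`. -/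
def popCsm (d : ℕ) (α : ℝ) (τ : Measure ℝ) (ν : Measure (Euc d)) : ℝ≥0∞ :=
  ∫⁻ t, (ENNReal.ofReal (muOU α t ^ 2 / sigSq α t ^ 2) *
    ∫⁻ y, ENNReal.ofReal ((popM2 d α ν t y - ‖popM1 d α ν t y‖ ^ 2) *
      popDens d α ν t y) ∂volume) ∂τ

/-- Joint law of `(S, x̃)` where `S` has `N` i.i.d. `ν` entries and `x̃ ~ ν` is independent. -/
def pairLaw (d N : ℕ) (ν : Measure (Euc d)) : Measure ((Fin N → Euc d) × Euc d) :=
  (Measure.pi fun _ : Fin N => ν).prod ν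

/-- The expected squared score-stability discrepancy of a deterministic score matching
algorithm `A` at coordinate `i`. -/
def stabGap (d N : ℕ) (α : ℝ) (τ : Measure ℝ) (ν : Measure (Euc d))
    (A : (Fin N → Euc d) → Euc d → ℝ → Euc d) (i : Fin N) : ℝ≥0∞ :=
  ∫⁻ q : (Fin N → Euc d) × Euc d,
    (∫⁻ t, ∫⁻ y, ENNReal.ofReal
      (‖A q.1 y t - A (Function.update q.1 i q.2) y t‖ ^ 2 * ouKernel d α t q.2 y)
        ∂volume ∂τ) ∂(pairLaw d N ν)

/-- Score stability with constant `ε`. -/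
def ScoreStable (d N : ℕ) (α : ℝ) (τ : Measure ℝ) (ν : Measure (Euc d))
    (A : (Fin N → Euc d) → Euc d → ℝ → Euc d) (ε : ℝ) : Prop :=
  ∀ i : Fin N, stabGap d N α τ ν A i ≤ ENNReal.ofReal (ε ^ 2)


section AuxLemmas
open InnerProductSpace
set_option maxHeartbeats 1000000

lemma sigSq_pos {α : ℝ} (hα : 0 ≤ α) {t : ℝ} (ht : 0 < t) : 0 < sigSq α t := by
  unfold sigSq
  split_ifs with h
  · apply div_pos _ h
    have : Real.exp (-(2 * α * t)) < 1 := by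
      rw [Real.exp_lt_one_iff]; nlinarith
    linarith
  · linarith

lemma ouKernel_pos {d : ℕ} {α t : ℝ} (hσ : 0 < sigSq α t) (x y : Euc d) :
    0 < ouKernel d α t x y :=
  mul_pos (Real.rpow_pos_of_pos (by positivity) _) (Real.exp_pos _)

lemma continuous_sigSq (α : ℝ) : Continuous (sigSq α) := by
  unfold sigSq
  by_cases h : 0 < α
  · simp only [if_pos h]; fun_prop
  · simp only [if_neg h]; fun_prop

lemma continuous_muOU (α : ℝ) : Continuous (muOU α) := by
  unfold muOU; fun_prop

lemma measurable_rpow_const (c : ℝ) : Measurable fun x : ℝ => x ^ c := by measurability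

lemma gaussGrad (d : ℕ) (σ2 C : ℝ) (m y : Euc d) :
    HasGradientAt (fun z : Euc d => C * Real.exp (-‖z - m‖ ^ 2 / (2 * σ2)))
      ((C * Real.exp (-‖y - m‖ ^ 2 / (2 * σ2)) * σ2⁻¹) • (m - y)) y := by
  rw [hasGradientAt_iff_hasFDerivAt]
  have h1 : HasFDerivAt (fun z : Euc d => ‖z - m‖ ^ 2) (2 • (innerSL ℝ (y - m))) y := by
    simpa using ((hasFDerivAt_id y).sub_const m).norm_sq
  have h2 : HasFDerivAt (fun z : Euc d => -‖z - m‖ ^ 2 / (2 * σ2))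
      ((-(2 * σ2)⁻¹) • (2 • (innerSL ℝ (y - m)))) y := by
    have h := h1.const_smul (-(2 * σ2)⁻¹)
    have heq : (fun z : Euc d => (-(2 * σ2)⁻¹) • ‖z - m‖ ^ 2)
        = (fun z : Euc d => -‖z - m‖ ^ 2 / (2 * σ2)) := by
      funext z; simp [smul_eq_mul]; ring
    rw [← heq]; exact h
  have h3 := ((Real.hasDerivAt_exp (-‖y - m‖ ^ 2 / (2 * σ2))).comp_hasFDerivAt y h2).const_mul C
  refine h3.congr_fderiv ?_
  ext z
  simp [real_inner_smul_left, inner_sub_left, smul_eq_mul]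
  ring

lemma sum_condScore_smul (d n : ℕ) (σ2 μ : ℝ) (φ : Fin n → ℝ) (S : Fin n → Euc d) (y : Euc d) :
    ∑ i, ((φ i) * σ2⁻¹) • (μ • S i - y)
      = σ2⁻¹ • (μ • (∑ i, φ i • S i) - (∑ i, φ i) • y) := by
  have step : ∀ i : Fin n, ((φ i) * σ2⁻¹) • (μ • S i - y)
      = σ2⁻¹ • (μ • (φ i • S i)) - (σ2⁻¹ * φ i) • y := by
    intro i
    rw [smul_sub]
    congr 1
    · rw [smul_smul, smul_smul, smul_smul]; congr 1; ring
    · congr 1; ring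
  rw [Finset.sum_congr rfl fun i _ => step i, Finset.sum_sub_distrib,
    ← Finset.smul_sum, ← Finset.smul_sum, ← Finset.sum_smul, smul_sub]
  congr 1
  rw [smul_smul, ← Finset.mul_sum]

lemma empScore_eq (d N : ℕ) (hN : 0 < N) (α t : ℝ) (hσ : 0 < sigSq α t)
    (S : Fin N → Euc d) (y : Euc d) :
    empScore d N α S t y = (sigSq α t)⁻¹ • (muOU α t • empM1 d N α S t y - y) := by
  have hNe : (N : ℝ) ≠ 0 := Nat.cast_ne_zero.2 hN.ne'
  have hφ : ∀ i : Fin N, 0 < ouKernel d α t (S i) y := fun i => ouKernel_pos hσ _ _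
  have hPpos : 0 < ∑ i, ouKernel d α t (S i) y := by
    have : (Finset.univ : Finset (Fin N)).Nonempty := ⟨⟨0, hN⟩, Finset.mem_univ _⟩
    exact Finset.sum_pos (fun i _ => hφ i) this
  have hdens : 0 < empDens d N α S t y := by
    unfold empDens; positivity
  -- derivative of each kernel
  have hker : ∀ i : Fin N, HasFDerivAt (fun z : Euc d => ouKernel d α t (S i) z)
      (toDual ℝ (Euc d) ((ouKernel d α t (S i) y * (sigSq α t)⁻¹) •
        (muOU α t • S i - y))) y := by
    intro i
    have := (gaussGrad d (sigSq α t) ((2 * Real.pi * sigSq α t) ^ (-(d : ℝ) / 2))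
      (muOU α t • S i) y).hasFDerivAt
    exact this
  have hsum := HasFDerivAt.sum (fun i (_ : i ∈ Finset.univ) => hker i)
  have hdsum := hsum.const_mul ((N : ℝ)⁻¹)
  have hFD : HasFDerivAt (fun z : Euc d => empDens d N α S t z)
      (toDual ℝ (Euc d) ((N : ℝ)⁻¹ • ∑ i, ((ouKernel d α t (S i) y * (sigSq α t)⁻¹) •
        (muOU α t • S i - y)))) y := by
    rw [_root_.map_smul, map_sum]
    simpa only [empDens, Finset.sum_apply] using hdsum
  have hlog := (Real.hasDerivAt_log hdens.ne').comp_hasFDerivAt y hFD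
  have hG : HasGradientAt (fun z : Euc d => Real.log (empDens d N α S t z))
      ((empDens d N α S t y)⁻¹ • ((N : ℝ)⁻¹ • ∑ i, ((ouKernel d α t (S i) y *
        (sigSq α t)⁻¹) • (muOU α t • S i - y)))) y := by
    rw [hasGradientAt_iff_hasFDerivAt, _root_.map_smul]
    exact hlog
  rw [empScore, hG.gradient, sum_condScore_smul]
  -- scalar algebra
  set P := ∑ i, ouKernel d α t (S i) y with hP
  set Q := ∑ i, ouKernel d α t (S i) y • S i with hQ
  unfold empM1 empDens
  rw [← hP, ← hQ]
  rw [smul_smul, smul_smul, smul_sub, smul_sub, smul_smul, smul_smul, smul_smul, smul_smul]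
  rw [mul_inv]
  congr 1
  · congr 1; field_simp
  · congr 1; field_simp

lemma bias_var {d n : ℕ} (w : Fin n → ℝ) (c : Fin n → Euc d) (W : ℝ) (cb s' : Euc d)
    (hW : ∑ i, w i = W) (hcb : ∑ i, w i • c i = W • cb) :
    ∑ i, w i * ‖s' - c i‖ ^ 2 = W * ‖s' - cb‖ ^ 2 + ∑ i, w i * ‖c i - cb‖ ^ 2 := by
  have key : ∑ i, w i • (cb - c i) = 0 := by
    rw [Finset.sum_congr rfl (fun i _ => smul_sub (w i) cb (c i)), Finset.sum_sub_distrib,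
      ← Finset.sum_smul, hW, hcb, sub_self]
  have expand : ∀ i : Fin n, ‖s' - c i‖ ^ 2
      = ‖s' - cb‖ ^ 2 + 2 * inner ℝ (s' - cb) (cb - c i) + ‖c i - cb‖ ^ 2 := by
    intro i
    have h : s' - c i = (s' - cb) + (cb - c i) := by abel
    rw [h, norm_add_sq_real, norm_sub_rev cb (c i)]
  calc ∑ i, w i * ‖s' - c i‖ ^ 2
      = ∑ i, (w i * ‖s' - cb‖ ^ 2 + 2 * inner ℝ (s' - cb) (w i • (cb - c i))
          + w i * ‖c i - cb‖ ^ 2) := by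
        refine Finset.sum_congr rfl fun i _ => ?_
        rw [expand i, real_inner_smul_right]; ring
    _ = W * ‖s' - cb‖ ^ 2 + 2 * inner ℝ (s' - cb) (∑ i, w i • (cb - c i))
          + ∑ i, w i * ‖c i - cb‖ ^ 2 := by
        rw [Finset.sum_add_distrib, Finset.sum_add_distrib, ← Finset.sum_mul, hW,
          ← Finset.mul_sum, ← inner_sum]
    _ = W * ‖s' - cb‖ ^ 2 + ∑ i, w i * ‖c i - cb‖ ^ 2 := by
        rw [key, inner_zero_right]; ring

lemma second_moment {d n : ℕ} (w : Fin n → ℝ) (x : Fin n → Euc d) (W : ℝ) (m : Euc d)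
    (hW : ∑ i, w i = W) (hm : ∑ i, w i • x i = W • m) :
    ∑ i, w i * ‖x i - m‖ ^ 2 = (∑ i, w i * ‖x i‖ ^ 2) - W * ‖m‖ ^ 2 := by
  have expand : ∀ i : Fin n, w i * ‖x i - m‖ ^ 2
      = w i * ‖x i‖ ^ 2 - 2 * inner ℝ (w i • x i) m + w i * ‖m‖ ^ 2 := by
    intro i
    rw [norm_sub_sq_real, real_inner_smul_left]; ring
  calc ∑ i, w i * ‖x i - m‖ ^ 2
      = (∑ i, w i * ‖x i‖ ^ 2) - 2 * inner ℝ (∑ i, w i • x i) m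
        + (∑ i, w i) * ‖m‖ ^ 2 := by
        rw [Finset.sum_congr rfl fun i _ => expand i, Finset.sum_add_distrib,
          Finset.sum_sub_distrib, ← Finset.sum_mul, sum_inner, ← Finset.mul_sum]
    _ = (∑ i, w i * ‖x i‖ ^ 2) - W * ‖m‖ ^ 2 := by
        rw [hW, hm, real_inner_smul_left, real_inner_self_eq_norm_sq]; ring

lemma pointwise_key (d N : ℕ) (hN : 0 < N) (α t : ℝ) (hσ : 0 < sigSq α t)
    (S : Fin N → Euc d) (y : Euc d) (s' : Euc d) :
    ((N : ℝ)⁻¹ * ∑ i, ‖s' - condScore d α t (S i) y‖ ^ 2 * ouKernel d α t (S i) y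
      = ‖s' - (sigSq α t)⁻¹ • (muOU α t • empM1 d N α S t y - y)‖ ^ 2
          * empDens d N α S t y
        + muOU α t ^ 2 / sigSq α t ^ 2 *
          ((empM2 d N α S t y - ‖empM1 d N α S t y‖ ^ 2) * empDens d N α S t y))
    ∧ 0 ≤ empM2 d N α S t y - ‖empM1 d N α S t y‖ ^ 2 := by
  have hφ : ∀ i : Fin N, 0 < ouKernel d α t (S i) y := fun i => ouKernel_pos hσ _ _
  have hPpos : 0 < ∑ i, ouKernel d α t (S i) y :=
    Finset.sum_pos (fun i _ => hφ i) ⟨⟨0, hN⟩, Finset.mem_univ _⟩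
  set σ2 := sigSq α t with hσ2def
  set μ := muOU α t with hμdef
  set w : Fin N → ℝ := fun i => ouKernel d α t (S i) y with hw
  set P := ∑ i, w i with hPdef
  set m1 := empM1 d N α S t y with hm1def
  set cb : Euc d := σ2⁻¹ • (μ • m1 - y) with hcb
  have hm : ∑ i, w i • S i = P • m1 := by
    rw [hm1def, empM1, smul_smul, mul_inv_cancel₀ hPpos.ne', one_smul]
  have hscb : ∑ i, w i • condScore d α t (S i) y = P • cb := by
    have h1 : ∀ i : Fin N, w i • condScore d α t (S i) y
        = (w i * σ2⁻¹) • (μ • S i - y) := fun i => by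
      rw [condScore, smul_smul]
    rw [Finset.sum_congr rfl fun i _ => h1 i, sum_condScore_smul, hcb, hm, ← hPdef]
    module
  have hbv := bias_var w (fun i => condScore d α t (S i) y) P cb s' rfl hscb
  have hvar : ∀ i : Fin N, ‖condScore d α t (S i) y - cb‖ ^ 2
      = (σ2⁻¹ * μ) ^ 2 * ‖S i - m1‖ ^ 2 := by
    intro i
    have h2 : condScore d α t (S i) y - cb = (σ2⁻¹ * μ) • (S i - m1) := by
      rw [condScore, hcb, ← smul_sub, ← hσ2def, ← hμdef]
      rw [sub_sub_sub_cancel_right, ← smul_sub, smul_smul]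
    rw [h2, norm_smul, mul_pow, Real.norm_eq_abs, sq_abs]
  have hsm := second_moment w S P m1 rfl hm
  have hm2 : ∑ i, w i * ‖S i‖ ^ 2 = P * empM2 d N α S t y := by
    rw [empM2, ← hPdef, ← mul_assoc, mul_inv_cancel₀ hPpos.ne', one_mul]
  have hvarsum : ∑ i, w i * ‖condScore d α t (S i) y - cb‖ ^ 2
      = (σ2⁻¹ * μ) ^ 2 * (P * (empM2 d N α S t y - ‖m1‖ ^ 2)) := by
    rw [Finset.sum_congr rfl fun i _ => by rw [hvar i]]
    rw [Finset.sum_congr rfl fun i _ => (by ring :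
        w i * ((σ2⁻¹ * μ) ^ 2 * ‖S i - m1‖ ^ 2) = (σ2⁻¹ * μ) ^ 2 * (w i * ‖S i - m1‖ ^ 2)),
      ← Finset.mul_sum, hsm, hm2]
    ring
  have hnonneg : 0 ≤ empM2 d N α S t y - ‖m1‖ ^ 2 := by
    have h0 : 0 ≤ ∑ i, w i * ‖S i - m1‖ ^ 2 :=
      Finset.sum_nonneg fun i _ => mul_nonneg (hφ i).le (by positivity)
    rw [hsm, hm2] at h0
    nlinarith [hPpos]
  constructor
  · have hdd : empDens d N α S t y = (N : ℝ)⁻¹ * P := rfl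
    rw [Finset.sum_congr rfl fun (i : Fin N) _ => (mul_comm (‖s' - condScore d α t (S i) y‖ ^ 2)
      (w i)), hbv, hvarsum, hdd]
    have hσne : σ2 ≠ 0 := hσ.ne'
    field_simp
  · exact hnonneg

section Meas
variable {d N : ℕ} {α : ℝ} {δ : Type} [MeasurableSpace δ] {u : δ → ℝ} {v : δ → Euc d}

lemma measurable_sigSq_comp (hu : Measurable u) : Measurable fun q => sigSq α (u q) :=
  (continuous_sigSq α).measurable.comp hu

lemma measurable_muOU_comp (hu : Measurable u) : Measurable fun q => muOU α (u q) :=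
  (continuous_muOU α).measurable.comp hu

lemma measurable_ouKernel (x : Euc d) (hu : Measurable u) (hv : Measurable v) :
    Measurable fun q => ouKernel d α (u q) x (v q) := by
  unfold ouKernel
  have hσ := measurable_sigSq_comp (α := α) hu
  have hμ := measurable_muOU_comp (α := α) hu
  have h1 : Measurable fun q => (2 * Real.pi * sigSq α (u q)) ^ (-(d : ℝ) / 2) :=
    (measurable_rpow_const _).comp (hσ.const_mul (2 * Real.pi))
  have h2 : Measurable fun q => -‖v q - muOU α (u q) • x‖ ^ 2 :=
    (((hv.sub (hμ.smul_const x)).norm.pow_const 2)).neg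
  exact h1.mul (Real.measurable_exp.comp (h2.div (hσ.const_mul 2)))

lemma measurable_empDens (S : Fin N → Euc d) (hu : Measurable u) (hv : Measurable v) :
    Measurable fun q => empDens d N α S (u q) (v q) := by
  unfold empDens
  exact (Finset.measurable_sum _ fun i _ => measurable_ouKernel (S i) hu hv).const_mul _

lemma measurable_empM1 (S : Fin N → Euc d) (hu : Measurable u) (hv : Measurable v) :
    Measurable fun q => empM1 d N α S (u q) (v q) := by
  unfold empM1
  exact ((Finset.measurable_sum _ fun i _ => measurable_ouKernel (S i) hu hv).inv).smul
    (Finset.measurable_sum _ fun i _ => (measurable_ouKernel (S i) hu hv).smul_const (S i))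

lemma measurable_empM2 (S : Fin N → Euc d) (hu : Measurable u) (hv : Measurable v) :
    Measurable fun q => empM2 d N α S (u q) (v q) := by
  unfold empM2
  exact ((Finset.measurable_sum _ fun i _ => measurable_ouKernel (S i) hu hv).inv).mul
    (Finset.measurable_sum _ fun i _ => (measurable_ouKernel (S i) hu hv).mul_const _)

lemma measurable_dsm_integrand (s : Euc d → ℝ → Euc d) (hs : Measurable (Function.uncurry s))
    (x : Euc d) (hu : Measurable u) (hv : Measurable v) :
    Measurable fun q => ENNReal.ofReal
      (‖s (v q) (u q) - condScore d α (u q) x (v q)‖ ^ 2 * ouKernel d α (u q) x (v q)) := by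
  have hsvu : Measurable fun q => s (v q) (u q) := hs.comp (hv.prodMk hu)
  have hcs : Measurable fun q => condScore d α (u q) x (v q) := by
    unfold condScore
    exact ((measurable_sigSq_comp hu).inv).smul
      (((measurable_muOU_comp hu).smul_const x).sub hv)
  exact (((hsvu.sub hcs).norm.pow_const 2).mul (measurable_ouKernel x hu hv)).ennreal_ofReal

lemma measurable_sm_integrand (S : Fin N → Euc d) (s : Euc d → ℝ → Euc d)
    (hs : Measurable (Function.uncurry s)) (hu : Measurable u) (hv : Measurable v) :
    Measurable fun q => ENNReal.ofReal
      (‖s (v q) (u q) - (sigSq α (u q))⁻¹ •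
          (muOU α (u q) • empM1 d N α S (u q) (v q) - v q)‖ ^ 2
        * empDens d N α S (u q) (v q)) := by
  have hsvu : Measurable fun q => s (v q) (u q) := hs.comp (hv.prodMk hu)
  have hcs : Measurable fun q => (sigSq α (u q))⁻¹ •
      (muOU α (u q) • empM1 d N α S (u q) (v q) - v q) :=
    ((measurable_sigSq_comp hu).inv).smul
      (((measurable_muOU_comp hu).smul (measurable_empM1 S hu hv)).sub hv)
  exact (((hsvu.sub hcs).norm.pow_const 2).mul (measurable_empDens S hu hv)).ennreal_ofReal

lemma measurable_c_integrand (S : Fin N → Euc d) (hu : Measurable u) (hv : Measurable v) :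
    Measurable fun q => ENNReal.ofReal
      ((empM2 d N α S (u q) (v q) - ‖empM1 d N α S (u q) (v q)‖ ^ 2)
        * empDens d N α S (u q) (v q)) :=
  (((measurable_empM2 S hu hv).sub
    ((measurable_empM1 S hu hv).norm.pow_const 2)).mul (measurable_empDens S hu hv)).ennreal_ofReal

end Meas

end AuxLemmas

set_option maxHeartbeats 1000000 in
/-- For every dataset `S` and every score function `s`, the empirical
denoising score matching loss equals the empirical score matching loss plus the empirical
constant `Ĉ_sm(S,τ)`, as an identity in `[0,∞]`. -/
theorem empirical_dsm_eq_sm_add_const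
    (d N : ℕ) (hN : 0 < N) (α T : ℝ) (hα : 0 ≤ α) (hT : 0 < T)
    (τ : Measure ℝ) [IsProbabilityMeasure τ] (hτ : τ (Set.Ioc 0 T)ᶜ = 0)
    (s : Euc d → ℝ → Euc d) (hs : Measurable (Function.uncurry s))
    (S : Fin N → Euc d) :
    empDSM d N α τ s S = empSM d N α τ s S + empCsm d N α τ S := by
  have hNinv : ((N : ℝ≥0∞))⁻¹ ≠ ⊤ := by simp [hN.ne']
  have hae : ∀ᵐ t ∂τ, t ∈ Set.Ioc 0 T := (MeasureTheory.mem_ae_iff).2 hτ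
  set G : Fin N → ℝ → ℝ≥0∞ := fun i t => ∫⁻ y, ENNReal.ofReal
    (‖s y t - condScore d α t (S i) y‖ ^ 2 * ouKernel d α t (S i) y) ∂volume with hG
  set Hsm : ℝ → ℝ≥0∞ := fun t => ∫⁻ y, ENNReal.ofReal
    (‖s y t - (sigSq α t)⁻¹ • (muOU α t • empM1 d N α S t y - y)‖ ^ 2
      * empDens d N α S t y) ∂volume with hHsm
  set HC : ℝ → ℝ≥0∞ := fun t => ENNReal.ofReal (muOU α t ^ 2 / sigSq α t ^ 2) *
    ∫⁻ y, ENNReal.ofReal ((empM2 d N α S t y - ‖empM1 d N α S t y‖ ^ 2) *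
      empDens d N α S t y) ∂volume with hHC
  have hGm : ∀ i, Measurable (G i) := fun i =>
    (measurable_dsm_integrand s hs (S i) measurable_fst measurable_snd).lintegral_prod_right'
  have hHsmM : Measurable Hsm :=
    (measurable_sm_integrand S s hs measurable_fst measurable_snd).lintegral_prod_right'
  have claim1 : ∀ t ∈ Set.Ioc (0 : ℝ) T,
      (N : ℝ≥0∞)⁻¹ * ∑ i, G i t = Hsm t + HC t := by
    intro t ht
    have hσt : 0 < sigSq α t := sigSq_pos hα ht.1
    have hdens_nn : ∀ y : Euc d, 0 ≤ empDens d N α S t y := by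
      intro y
      unfold empDens
      exact mul_nonneg (by positivity)
        (Finset.sum_nonneg fun i _ => (ouKernel_pos hσt _ _).le)
    have hFiy : ∀ i : Fin N, Measurable fun y : Euc d => ENNReal.ofReal
        (‖s y t - condScore d α t (S i) y‖ ^ 2 * ouKernel d α t (S i) y) :=
      fun i => measurable_dsm_integrand s hs (S i)
        (measurable_const : Measurable fun _ : Euc d => t) measurable_id
    have hF'y : Measurable fun y : Euc d => ENNReal.ofReal
        (‖s y t - (sigSq α t)⁻¹ • (muOU α t • empM1 d N α S t y - y)‖ ^ 2
          * empDens d N α S t y) :=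
      measurable_sm_integrand S s hs
        (measurable_const : Measurable fun _ : Euc d => t) measurable_id
    simp only [hG, hHsm, hHC]
    rw [← lintegral_finset_sum _ (fun i _ => hFiy i)]
    rw [← lintegral_const_mul' _ _ hNinv]
    have hpt : ∀ y : Euc d,
        (N : ℝ≥0∞)⁻¹ * ∑ i, ENNReal.ofReal
            (‖s y t - condScore d α t (S i) y‖ ^ 2 * ouKernel d α t (S i) y)
        = ENNReal.ofReal (‖s y t - (sigSq α t)⁻¹ •
              (muOU α t • empM1 d N α S t y - y)‖ ^ 2 * empDens d N α S t y)
          + ENNReal.ofReal (muOU α t ^ 2 / sigSq α t ^ 2 *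
              ((empM2 d N α S t y - ‖empM1 d N α S t y‖ ^ 2) * empDens d N α S t y)) := by
      intro y
      obtain ⟨hkey, hnn⟩ := pointwise_key d N hN α t hσt S y (s y t)
      rw [← ENNReal.ofReal_sum_of_nonneg (fun i _ => mul_nonneg (by positivity)
        (ouKernel_pos hσt _ _).le)]
      have hNcast : ((N : ℝ≥0∞))⁻¹ = ENNReal.ofReal ((N : ℝ)⁻¹) := by
        rw [ENNReal.ofReal_inv_of_pos (by exact_mod_cast hN), ENNReal.ofReal_natCast]
      rw [hNcast, ← ENNReal.ofReal_mul (by positivity), hkey,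
        ENNReal.ofReal_add (mul_nonneg (by positivity) (hdens_nn y))
          (mul_nonneg (by positivity) (mul_nonneg hnn (hdens_nn y)))]
    rw [lintegral_congr hpt]
    rw [lintegral_add_left hF'y]
    congr 1
    have hc : (0 : ℝ) ≤ muOU α t ^ 2 / sigSq α t ^ 2 := by positivity
    have hsplit : ∀ y : Euc d, ENNReal.ofReal (muOU α t ^ 2 / sigSq α t ^ 2 *
        ((empM2 d N α S t y - ‖empM1 d N α S t y‖ ^ 2) * empDens d N α S t y))
        = ENNReal.ofReal (muOU α t ^ 2 / sigSq α t ^ 2) *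
          ENNReal.ofReal ((empM2 d N α S t y - ‖empM1 d N α S t y‖ ^ 2) *
            empDens d N α S t y) := fun y => ENNReal.ofReal_mul hc
    rw [lintegral_congr hsplit, lintegral_const_mul' _ _ ENNReal.ofReal_ne_top]
  calc empDSM d N α τ s S = ∫⁻ t, (N : ℝ≥0∞)⁻¹ * ∑ i, G i t ∂τ := by
        rw [show empDSM d N α τ s S = (N : ℝ≥0∞)⁻¹ * ∑ i, ∫⁻ t, G i t ∂τ from rfl,
          ← lintegral_finset_sum _ (fun i _ => hGm i),
          ← lintegral_const_mul' _ _ hNinv]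
    _ = ∫⁻ t, (Hsm t + HC t) ∂τ := by
        apply lintegral_congr_ae
        filter_upwards [hae] with t ht
        exact claim1 t ht
    _ = (∫⁻ t, Hsm t ∂τ) + ∫⁻ t, HC t ∂τ := lintegral_add_left hHsmM _
    _ = empSM d N α τ s S + empCsm d N α τ S := by
        congr 1
        rw [empSM]
        apply lintegral_congr_ae
        filter_upwards [hae] with t ht
        simp only [hHsm]
        apply lintegral_congr
        intro y
        rw [empScore_eq d N hN α t (sigSq_pos hα ht.1) S y]


end
end

section
/- Let A be a deterministic score matching algorithm that is score stable with constant ε_stab, let S have i.i.d. ν-distributed entries and set ŝ = A(S). If E[ℓ̂_dsm(ŝ;S,τ)] < ∞, then | E[ℓ_dsm(ŝ;τ)]^{1/2} − E[ℓ̂_dsm(ŝ;S,τ)]^{1/2} | ≤ ε_stab. -/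
open MeasureTheory Real ENNReal

noncomputable section

open Function
set_option maxHeartbeats 1000000

/-- The weighted base measure on `((Fin N → Euc d) × Euc d) × ℝ × Euc d`. -/
def rhoM (d N : ℕ) (α : ℝ) (τ : Measure ℝ) (ν : Measure (Euc d)) :
    Measure (((Fin N → Euc d) × Euc d) × ℝ × Euc d) :=
  ((pairLaw d N ν).prod (τ.prod (volume : Measure (Euc d)))).withDensity
    (fun ω => ENNReal.ofReal (ouKernel d α ω.2.1 ω.1.2 ω.2.2))

lemma measurable_sigSq (α : ℝ) : Measurable (sigSq α) := by
  unfold sigSq; split_ifs <;> fun_prop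

lemma measurable_ouKernel_s2 (d : ℕ) (α : ℝ) :
    Measurable fun p : ℝ × Euc d × Euc d => ouKernel d α p.1 p.2.1 p.2.2 := by
  unfold ouKernel muOU
  have h1 : Measurable fun p : ℝ × Euc d × Euc d => (2 * Real.pi * sigSq α p.1) ^ (-(d:ℝ)/2) :=
    (((measurable_sigSq α).comp measurable_fst).const_mul _).pow measurable_const
  have h2 : Measurable fun p : ℝ × Euc d × Euc d =>
      Real.exp (-‖p.2.2 - Real.exp (-(α * p.1)) • p.2.1‖ ^ 2 / (2 * sigSq α p.1)) := by
    have hs : Measurable fun p : ℝ × Euc d × Euc d => sigSq α p.1 :=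
      (measurable_sigSq α).comp measurable_fst
    fun_prop
  exact h1.mul h2

lemma measurable_condScore (d : ℕ) (α : ℝ) :
    Measurable fun p : ℝ × Euc d × Euc d => condScore d α p.1 p.2.1 p.2.2 := by
  unfold condScore muOU
  have hs : Measurable fun p : ℝ × Euc d × Euc d => sigSq α p.1 :=
    (measurable_sigSq α).comp measurable_fst
  fun_prop

lemma ofReal_sq_mul {d : ℕ} (v : Euc d) (c : ℝ) :
    ENNReal.ofReal (‖v‖ ^ 2 * c) = (‖v‖₊ : ℝ≥0∞) ^ 2 * ENNReal.ofReal c := by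
  rw [ENNReal.ofReal_mul (by positivity)]
  congr 1
  rw [ENNReal.ofReal_pow (norm_nonneg v), ofReal_norm_eq_enorm, enorm_eq_nnnorm]

/-- Unfold a squared-norm integral against `rhoM` into iterated integrals. -/
lemma lintegral_rhoM {d N : ℕ} {α : ℝ} {τ : Measure ℝ} {ν : Measure (Euc d)}
    [SFinite τ] [SFinite ν]
    {h : ((Fin N → Euc d) × Euc d) × ℝ × Euc d → Euc d} (hh : Measurable h) :
    ∫⁻ ω, (‖h ω‖₊ : ℝ≥0∞) ^ 2 ∂(rhoM d N α τ ν) =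
      ∫⁻ q, ∫⁻ t, ∫⁻ y,
        ENNReal.ofReal (‖h (q, t, y)‖ ^ 2 * ouKernel d α t q.2 y) ∂volume ∂τ
          ∂(pairLaw d N ν) := by
  have hk := measurable_ouKernel_s2 d α
  have hw : Measurable fun ω : ((Fin N → Euc d) × Euc d) × ℝ × Euc d =>
      ENNReal.ofReal (ouKernel d α ω.2.1 ω.1.2 ω.2.2) := by fun_prop
  have hhn : Measurable fun ω : ((Fin N → Euc d) × Euc d) × ℝ × Euc d =>
      (‖h ω‖₊ : ℝ≥0∞) ^ 2 := by fun_prop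
  rw [rhoM, lintegral_withDensity_eq_lintegral_mul _ hw hhn]
  simp only [Pi.mul_apply]
  rw [lintegral_prod _ (by exact (hw.mul hhn).aemeasurable)]
  congr 1; funext q
  rw [lintegral_prod _ (Measurable.aemeasurable (by fun_prop))]
  congr 1; funext t
  congr 1; funext y
  rw [ofReal_sq_mul, mul_comm]

/-- Triangle inequality for square roots of squared-norm integrals. -/
lemma sqrt_lintegral_triangle {d : ℕ} {Ω : Type*} [MeasurableSpace Ω] (μ : Measure Ω)
    {f g : Ω → Euc d} (hf : Measurable f) (hg : Measurable g) :
    (∫⁻ ω, (‖f ω‖₊ : ℝ≥0∞) ^ 2 ∂μ) ^ ((1:ℝ)/2) ≤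
      (∫⁻ ω, (‖g ω‖₊ : ℝ≥0∞) ^ 2 ∂μ) ^ ((1:ℝ)/2) +
      (∫⁻ ω, (‖f ω - g ω‖₊ : ℝ≥0∞) ^ 2 ∂μ) ^ ((1:ℝ)/2) := by
  have key : ∀ h : Ω → Euc d, eLpNorm h 2 μ = (∫⁻ ω, (‖h ω‖₊ : ℝ≥0∞) ^ 2 ∂μ) ^ ((1:ℝ)/2) := by
    intro h
    rw [eLpNorm_eq_lintegral_rpow_enorm_toReal two_ne_zero ENNReal.ofNat_ne_top]
    simp [ENNReal.toReal_ofNat, ENNReal.rpow_two, enorm_eq_nnnorm]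
  have h0 : f = g + (f - g) := by
    funext ω; show f ω = g ω + (f ω - g ω); abel
  calc (∫⁻ ω, (‖f ω‖₊ : ℝ≥0∞) ^ 2 ∂μ) ^ ((1:ℝ)/2) = eLpNorm f 2 μ := (key f).symm
    _ = eLpNorm (g + (f - g)) 2 μ := by rw [← h0]
    _ ≤ eLpNorm g 2 μ + eLpNorm (f - g) 2 μ :=
        eLpNorm_add_le hg.aestronglyMeasurable (hf.sub hg).aestronglyMeasurable one_le_two
    _ = _ := by rw [key, key]; simp only [Pi.sub_apply]

lemma lintegral_pi_update {X : Type*} [MeasurableSpace X] (ν : Measure X)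
    [IsProbabilityMeasure ν] {N : ℕ} (i : Fin N) {F : (Fin N → X) → ℝ≥0∞}
    (hF : Measurable F) :
    ∫⁻ S, F S ∂(Measure.pi fun _ : Fin N => ν) =
      ∫⁻ S, ∫⁻ u, F (Function.update S i u) ∂ν ∂(Measure.pi fun _ : Fin N => ν) := by
  classical
  have hne : Nonempty X := by
    by_contra h
    rw [not_nonempty_iff] at h
    have h1 := measure_univ (μ := ν)
    rw [Set.univ_eq_empty_iff.2 h, measure_empty] at h1
    exact zero_ne_one h1
  obtain ⟨x⟩ := hne
  set x₀ : Fin N → X := fun _ => x with hx₀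
  set G : (Fin N → X) → ℝ≥0∞ := fun S => ∫⁻ u, F (Function.update S i u) ∂ν with hG
  have hGm : Measurable G :=
    Measurable.lintegral_prod_right (hF.comp measurable_update')
  have h1 : ∫⁻ S, F S ∂(Measure.pi fun _ : Fin N => ν)
      = (∫⋯∫⁻_(Finset.univ.erase i), G ∂(fun _ => ν)) x₀ := by
    rw [lintegral_eq_lmarginal_univ (μ := fun _ : Fin N => ν) x₀,
      lmarginal_erase' _ hF (Finset.mem_univ i)]
  have h2 : ∫⁻ S, G S ∂(Measure.pi fun _ : Fin N => ν)
      = (∫⋯∫⁻_(Finset.univ.erase i), G ∂(fun _ => ν)) x₀ := by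
    rw [lintegral_eq_lmarginal_univ (μ := fun _ : Fin N => ν) x₀,
      lmarginal_erase' _ hGm (Finset.mem_univ i)]
    congr 1
    funext S
    have : ∀ u, G (Function.update S i u) = G S := by
      intro u
      simp only [hG, Function.update_idem]
    simp only [this]
    simp [lintegral_const]
  rw [h1, ← h2]

lemma lintegral_swap_update {X : Type*} [MeasurableSpace X] (ν : Measure X)
    [IsProbabilityMeasure ν] {N : ℕ} (i : Fin N) {H : (Fin N → X) × X → ℝ≥0∞}
    (hH : Measurable H) :
    ∫⁻ q, H (Function.update q.1 i q.2, q.1 i) ∂((Measure.pi fun _ : Fin N => ν).prod ν) =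
      ∫⁻ q, H q ∂((Measure.pi fun _ : Fin N => ν).prod ν) := by
  classical
  have hHe : Measurable fun q : (Fin N → X) × X => H (Function.update q.1 i q.2, q.1 i) := by
    apply hH.comp
    exact (measurable_update'.comp (measurable_fst.prodMk measurable_snd)).prodMk
      ((measurable_pi_apply i).comp measurable_fst)
  rw [lintegral_prod _ hHe.aemeasurable, lintegral_prod _ hH.aemeasurable]
  have key : ∀ S : Fin N → X,
      (∫⁻ u, ∫⁻ v, H (Function.update S i v, u) ∂ν ∂ν)
        = ∫⁻ u, ∫⁻ v, H (Function.update S i u, v) ∂ν ∂ν := by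
    intro S
    have hg : AEMeasurable (Function.uncurry fun a b => H (Function.update S i a, b))
        (ν.prod ν) := by
      apply Measurable.aemeasurable
      apply hH.comp
      exact ((measurable_update S (a := i)).comp measurable_fst).prodMk measurable_snd
    exact (lintegral_lintegral_swap hg).symm
  calc ∫⁻ S, ∫⁻ u, H (Function.update S i u, S i) ∂ν ∂(Measure.pi fun _ : Fin N => ν)
      = ∫⁻ S, ∫⁻ u, ∫⁻ v, H (Function.update S i v, u) ∂ν ∂ν
          ∂(Measure.pi fun _ : Fin N => ν) := by
        rw [lintegral_pi_update ν i
          (F := fun S => ∫⁻ u, H (Function.update S i u, S i) ∂ν)]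
        · simp only [Function.update_idem, Function.update_self]
        · exact Measurable.lintegral_prod_right
            ((hH.comp (measurable_update'.prodMk
              ((measurable_pi_apply i).comp measurable_fst))).comp
              (measurable_fst.prodMk measurable_snd))
    _ = ∫⁻ S, ∫⁻ u, ∫⁻ v, H (Function.update S i u, v) ∂ν ∂ν
          ∂(Measure.pi fun _ : Fin N => ν) := by
        congr 1; funext S; exact key S
    _ = ∫⁻ S, ∫⁻ u, H (S, u) ∂ν ∂(Measure.pi fun _ : Fin N => ν) := by
        rw [lintegral_pi_update ν i (F := fun S => ∫⁻ u, H (S, u) ∂ν)]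
        exact Measurable.lintegral_prod_right
          (hH.comp (measurable_fst.prodMk measurable_snd))

/-- Measurability of iterated inner integrals. -/
lemma meas_double {d : ℕ} {β : Type*} [MeasurableSpace β] {τ : Measure ℝ} [SFinite τ]
    {f : β × ℝ × Euc d → ℝ≥0∞} (hf : Measurable f) :
    Measurable fun q : β => ∫⁻ t, ∫⁻ y, f (q, t, y) ∂(volume : Measure (Euc d)) ∂τ := by
  have h1 : Measurable fun r : β × ℝ => ∫⁻ y, f (r.1, r.2, y) ∂(volume : Measure (Euc d)) :=
    Measurable.lintegral_prod_right'
      (f := fun p : (β × ℝ) × Euc d => f (p.1.1, p.1.2, p.2)) (by fun_prop)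
  exact Measurable.lintegral_prod_right' h1

/-- The final `ℝ≥0∞` algebra: combining per-coordinate triangle inequalities. -/
lemma final_algebra {N : ℕ} (hN : 0 < N) (a : ℝ≥0∞) (b c : Fin N → ℝ≥0∞) (ε : ℝ) (hε : 0 ≤ ε)
    (h1 : ∀ i, a ^ ((1:ℝ)/2) ≤ (b i) ^ ((1:ℝ)/2) + (c i) ^ ((1:ℝ)/2))
    (h2 : ∀ i, (b i) ^ ((1:ℝ)/2) ≤ a ^ ((1:ℝ)/2) + (c i) ^ ((1:ℝ)/2))
    (hc : ∀ i, c i ≤ ENNReal.ofReal (ε ^ 2)) :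
    a ^ ((1:ℝ)/2) ≤ ((N:ℝ≥0∞)⁻¹ * ∑ i, b i) ^ ((1:ℝ)/2) + ENNReal.ofReal ε ∧
    ((N:ℝ≥0∞)⁻¹ * ∑ i, b i) ^ ((1:ℝ)/2) ≤ a ^ ((1:ℝ)/2) + ENNReal.ofReal ε := by
  have hr : (0:ℝ) ≤ 1/2 := by norm_num
  have hsq : ∀ x : ℝ≥0∞, (x ^ ((1:ℝ)/2)) ^ (2:ℝ) = x := fun x => by
    rw [← ENNReal.rpow_mul]; norm_num
  have hsq2 : ∀ x : ℝ≥0∞, (x ^ (2:ℝ)) ^ ((1:ℝ)/2) = x := fun x => by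
    rw [← ENNReal.rpow_mul]; norm_num
  have hNtop : (N:ℝ≥0∞) ≠ ⊤ := ENNReal.natCast_ne_top N
  have hN0 : (N:ℝ≥0∞) ≠ 0 := Nat.cast_ne_zero.mpr hN.ne'
  have hce : (ENNReal.ofReal (ε ^ 2)) ^ ((1:ℝ)/2) = ENNReal.ofReal ε := by
    rw [ENNReal.ofReal_pow hε, ← ENNReal.rpow_two, hsq2]
  have key : ∀ u v : Fin N → ℝ≥0∞,
      (∀ i, (u i) ^ ((1:ℝ)/2) ≤ (v i) ^ ((1:ℝ)/2) + (c i) ^ ((1:ℝ)/2)) →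
      ((N:ℝ≥0∞)⁻¹ * ∑ i, u i) ^ ((1:ℝ)/2)
        ≤ ((N:ℝ≥0∞)⁻¹ * ∑ i, v i) ^ ((1:ℝ)/2) + ENNReal.ofReal ε := by
    intro u v h
    have step1 : ∑ i, u i ≤ ∑ i, ((v i) ^ ((1:ℝ)/2) + (c i) ^ ((1:ℝ)/2)) ^ (2:ℝ) := by
      refine Finset.sum_le_sum fun i _ => ?_
      calc u i = ((u i) ^ ((1:ℝ)/2)) ^ (2:ℝ) := (hsq _).symm
        _ ≤ _ := ENNReal.rpow_le_rpow (h i) (by norm_num)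
    have step2 : (∑ i, ((v i) ^ ((1:ℝ)/2) + (c i) ^ ((1:ℝ)/2)) ^ (2:ℝ)) ^ ((1:ℝ)/2)
        ≤ (∑ i, v i) ^ ((1:ℝ)/2) + (∑ i, c i) ^ ((1:ℝ)/2) := by
      have := ENNReal.Lp_add_le (s := Finset.univ)
        (fun i => (v i) ^ ((1:ℝ)/2)) (fun i => (c i) ^ ((1:ℝ)/2))
        (by norm_num : (1:ℝ) ≤ 2)
      simpa only [hsq] using this
    have hcs : ∑ i, c i ≤ (N:ℝ≥0∞) * ENNReal.ofReal (ε ^ 2) :=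
      calc ∑ i, c i ≤ ∑ _i : Fin N, ENNReal.ofReal (ε ^ 2) :=
            Finset.sum_le_sum fun i _ => hc i
        _ = (N:ℝ≥0∞) * ENNReal.ofReal (ε ^ 2) := by
            simp [Finset.sum_const, nsmul_eq_mul]
    have hctail : ((N:ℝ≥0∞)⁻¹ * ∑ i, c i) ^ ((1:ℝ)/2) ≤ ENNReal.ofReal ε := by
      have hle : (N:ℝ≥0∞)⁻¹ * ∑ i, c i ≤ ENNReal.ofReal (ε ^ 2) := by
        calc (N:ℝ≥0∞)⁻¹ * ∑ i, c i
            ≤ (N:ℝ≥0∞)⁻¹ * ((N:ℝ≥0∞) * ENNReal.ofReal (ε ^ 2)) := mul_le_mul_right hcs _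
          _ = ENNReal.ofReal (ε ^ 2) := by
              rw [← mul_assoc, ENNReal.inv_mul_cancel hN0 hNtop, one_mul]
      calc ((N:ℝ≥0∞)⁻¹ * ∑ i, c i) ^ ((1:ℝ)/2)
          ≤ (ENNReal.ofReal (ε ^ 2)) ^ ((1:ℝ)/2) := ENNReal.rpow_le_rpow hle hr
        _ = ENNReal.ofReal ε := hce
    calc ((N:ℝ≥0∞)⁻¹ * ∑ i, u i) ^ ((1:ℝ)/2)
        ≤ ((N:ℝ≥0∞)⁻¹ * ∑ i, ((v i) ^ ((1:ℝ)/2) + (c i) ^ ((1:ℝ)/2)) ^ (2:ℝ)) ^ ((1:ℝ)/2) :=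
          ENNReal.rpow_le_rpow (mul_le_mul_right step1 _) hr
      _ = ((N:ℝ≥0∞)⁻¹) ^ ((1:ℝ)/2)
            * (∑ i, ((v i) ^ ((1:ℝ)/2) + (c i) ^ ((1:ℝ)/2)) ^ (2:ℝ)) ^ ((1:ℝ)/2) :=
          ENNReal.mul_rpow_of_nonneg _ _ hr
      _ ≤ ((N:ℝ≥0∞)⁻¹) ^ ((1:ℝ)/2) * ((∑ i, v i) ^ ((1:ℝ)/2) + (∑ i, c i) ^ ((1:ℝ)/2)) :=
          mul_le_mul_right step2 _
      _ = ((N:ℝ≥0∞)⁻¹ * ∑ i, v i) ^ ((1:ℝ)/2) + ((N:ℝ≥0∞)⁻¹ * ∑ i, c i) ^ ((1:ℝ)/2) := by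
          rw [mul_add, ← ENNReal.mul_rpow_of_nonneg _ _ hr, ← ENNReal.mul_rpow_of_nonneg _ _ hr]
      _ ≤ ((N:ℝ≥0∞)⁻¹ * ∑ i, v i) ^ ((1:ℝ)/2) + ENNReal.ofReal ε :=
          add_le_add_right hctail _
  have ha' : (N:ℝ≥0∞)⁻¹ * (∑ _i : Fin N, a) = a := by
    rw [Finset.sum_const, Finset.card_univ, Fintype.card_fin, nsmul_eq_mul, ← mul_assoc,
      ENNReal.inv_mul_cancel hN0 hNtop, one_mul]
  constructor
  · have := key (fun _ => a) b h1
    rwa [ha'] at this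
  · have := key b (fun _ => a) h2
    rwa [ha'] at this


/-- For a deterministic score matching algorithm `A` that is score stable with
constant `ε_stab`, with `S` having i.i.d. `ν` entries and `ŝ = A(S)`, if
`E[ℓ̂_dsm(ŝ;S,τ)] < ∞` then `|E[ℓ_dsm(ŝ;τ)]^{1/2} − E[ℓ̂_dsm(ŝ;S,τ)]^{1/2}| ≤ ε_stab`
(stated as the two one-sided inequalities in `[0,∞]`). -/
theorem generalisation_gap_dsm_of_scoreStable
    (d N : ℕ) (hN : 0 < N) (α T : ℝ) (hα : 0 ≤ α) (hT : 0 < T)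
    (τ : Measure ℝ) [IsProbabilityMeasure τ] (hτ : τ (Set.Ioc 0 T)ᶜ = 0)
    (ν : Measure (Euc d)) [IsProbabilityMeasure ν]
    (A : (Fin N → Euc d) → Euc d → ℝ → Euc d)
    (hA : Measurable fun q : (Fin N → Euc d) × Euc d × ℝ => A q.1 q.2.1 q.2.2)
    (εstab : ℝ) (hε : 0 < εstab)
    (hstab : ScoreStable d N α τ ν A εstab)
    (hfin : (∫⁻ S, empDSM d N α τ (A S) S ∂(Measure.pi fun _ : Fin N => ν)) ≠ ⊤) :
    (∫⁻ S, popDSM d α τ ν (A S) ∂(Measure.pi fun _ : Fin N => ν)) ^ ((1:ℝ)/2)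
        ≤ (∫⁻ S, empDSM d N α τ (A S) S ∂(Measure.pi fun _ : Fin N => ν)) ^ ((1:ℝ)/2)
          + ENNReal.ofReal εstab ∧
    (∫⁻ S, empDSM d N α τ (A S) S ∂(Measure.pi fun _ : Fin N => ν)) ^ ((1:ℝ)/2)
        ≤ (∫⁻ S, popDSM d α τ ν (A S) ∂(Measure.pi fun _ : Fin N => ν)) ^ ((1:ℝ)/2)
          + ENNReal.ofReal εstab := by

  classical
  have hk := measurable_ouKernel_s2 d α
  have hc := measurable_condScore d α
  have hFm : Measurable (fun ω : ((Fin N → Euc d) × Euc d) × ℝ × Euc d =>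
      A ω.1.1 ω.2.2 ω.2.1 - condScore d α ω.2.1 ω.1.2 ω.2.2) := by fun_prop
  have hGm : ∀ i : Fin N, Measurable (fun ω : ((Fin N → Euc d) × Euc d) × ℝ × Euc d =>
      A (Function.update ω.1.1 i ω.1.2) ω.2.2 ω.2.1
        - condScore d α ω.2.1 ω.1.2 ω.2.2) := by
    intro i
    have hu : Measurable fun ω : ((Fin N → Euc d) × Euc d) × ℝ × Euc d =>
        Function.update ω.1.1 i ω.1.2 := measurable_update'.comp (by fun_prop)
    fun_prop
  -- population loss identity
  have hpop : ∫⁻ S, popDSM d α τ ν (A S) ∂(Measure.pi fun _ : Fin N => ν)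
      = ∫⁻ ω, (‖A ω.1.1 ω.2.2 ω.2.1 - condScore d α ω.2.1 ω.1.2 ω.2.2‖₊ : ℝ≥0∞) ^ 2
          ∂(rhoM d N α τ ν) := by
    rw [lintegral_rhoM hFm, pairLaw,
      lintegral_prod _ (Measurable.aemeasurable (meas_double
        (f := fun ω : ((Fin N → Euc d) × Euc d) × ℝ × Euc d =>
          ENNReal.ofReal (‖A ω.1.1 ω.2.2 ω.2.1 - condScore d α ω.2.1 ω.1.2 ω.2.2‖ ^ 2
            * ouKernel d α ω.2.1 ω.1.2 ω.2.2)) (by fun_prop)))]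
    unfold popDSM
    congr 1; funext S
    have hAS : Measurable fun p : Euc d × ℝ => A S p.1 p.2 :=
      hA.comp (by fun_prop : Measurable fun p : Euc d × ℝ => (S, p.1, p.2))
    have hun : Measurable fun r : ℝ × Euc d =>
        ∫⁻ y, ENNReal.ofReal (‖A S y r.1 - condScore d α r.1 r.2 y‖ ^ 2
          * ouKernel d α r.1 r.2 y) ∂(volume : Measure (Euc d)) :=
      Measurable.lintegral_prod_right'
        (f := fun p : (ℝ × Euc d) × Euc d => ENNReal.ofReal
          (‖A S p.2 p.1.1 - condScore d α p.1.1 p.1.2 p.2‖ ^ 2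
            * ouKernel d α p.1.1 p.1.2 p.2)) (by fun_prop)
    rw [lintegral_lintegral_swap hun.aemeasurable]
  -- empirical loss identity
  have hJm : ∀ i : Fin N, Measurable fun S : Fin N → Euc d =>
      ∫⁻ t, ∫⁻ y, ENNReal.ofReal (‖A S y t - condScore d α t (S i) y‖ ^ 2
        * ouKernel d α t (S i) y) ∂(volume : Measure (Euc d)) ∂τ := by
    intro i
    exact meas_double (f := fun ω : (Fin N → Euc d) × ℝ × Euc d =>
      ENNReal.ofReal (‖A ω.1 ω.2.2 ω.2.1 - condScore d α ω.2.1 (ω.1 i) ω.2.2‖ ^ 2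
        * ouKernel d α ω.2.1 (ω.1 i) ω.2.2)) (by fun_prop)
  have hemp : ∫⁻ S, empDSM d N α τ (A S) S ∂(Measure.pi fun _ : Fin N => ν)
      = (N:ℝ≥0∞)⁻¹ * ∑ i : Fin N, ∫⁻ ω,
          (‖A (Function.update ω.1.1 i ω.1.2) ω.2.2 ω.2.1
            - condScore d α ω.2.1 ω.1.2 ω.2.2‖₊ : ℝ≥0∞) ^ 2 ∂(rhoM d N α τ ν) := by
    unfold empDSM
    rw [lintegral_const_mul _ (Finset.measurable_sum _ (fun i _ => hJm i))]
    congr 1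
    rw [lintegral_finset_sum _ (fun i _ => hJm i)]
    refine Finset.sum_congr rfl fun i _ => ?_
    have hHm : Measurable fun q : (Fin N → Euc d) × Euc d =>
        ∫⁻ t, ∫⁻ y, ENNReal.ofReal (‖A (Function.update q.1 i q.2) y t
          - condScore d α t q.2 y‖ ^ 2 * ouKernel d α t q.2 y)
            ∂(volume : Measure (Euc d)) ∂τ := by
      apply meas_double (f := fun ω : ((Fin N → Euc d) × Euc d) × ℝ × Euc d =>
        ENNReal.ofReal (‖A (Function.update ω.1.1 i ω.1.2) ω.2.2 ω.2.1
          - condScore d α ω.2.1 ω.1.2 ω.2.2‖ ^ 2 * ouKernel d α ω.2.1 ω.1.2 ω.2.2))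
      have hu : Measurable fun ω : ((Fin N → Euc d) × Euc d) × ℝ × Euc d =>
          Function.update ω.1.1 i ω.1.2 := measurable_update'.comp (by fun_prop)
      fun_prop
    calc ∫⁻ S, (∫⁻ t, ∫⁻ y, ENNReal.ofReal (‖A S y t - condScore d α t (S i) y‖ ^ 2
            * ouKernel d α t (S i) y) ∂(volume : Measure (Euc d)) ∂τ)
          ∂(Measure.pi fun _ : Fin N => ν)
        = ∫⁻ q : (Fin N → Euc d) × Euc d, (∫⁻ t, ∫⁻ y,
            ENNReal.ofReal (‖A q.1 y t - condScore d α t (q.1 i) y‖ ^ 2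
              * ouKernel d α t (q.1 i) y) ∂(volume : Measure (Euc d)) ∂τ)
            ∂((Measure.pi fun _ : Fin N => ν).prod ν) := by
          have hm1 : Measurable fun q : (Fin N → Euc d) × Euc d =>
              ∫⁻ t, ∫⁻ y, ENNReal.ofReal (‖A q.1 y t - condScore d α t (q.1 i) y‖ ^ 2
                * ouKernel d α t (q.1 i) y) ∂(volume : Measure (Euc d)) ∂τ :=
            (hJm i).comp measurable_fst
          rw [lintegral_prod _ hm1.aemeasurable]
          congr 1; funext S
          simp [lintegral_const]
      _ = ∫⁻ q : (Fin N → Euc d) × Euc d,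
            (fun q' : (Fin N → Euc d) × Euc d => ∫⁻ t, ∫⁻ y,
              ENNReal.ofReal (‖A (Function.update q'.1 i q'.2) y t
                - condScore d α t q'.2 y‖ ^ 2 * ouKernel d α t q'.2 y)
                ∂(volume : Measure (Euc d)) ∂τ) (Function.update q.1 i q.2, q.1 i)
            ∂((Measure.pi fun _ : Fin N => ν).prod ν) := by
          congr 1; funext q
          simp only [Function.update_idem, Function.update_eq_self]
      _ = ∫⁻ q : (Fin N → Euc d) × Euc d, (∫⁻ t, ∫⁻ y,
            ENNReal.ofReal (‖A (Function.update q.1 i q.2) y t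
              - condScore d α t q.2 y‖ ^ 2 * ouKernel d α t q.2 y)
              ∂(volume : Measure (Euc d)) ∂τ)
            ∂((Measure.pi fun _ : Fin N => ν).prod ν) :=
          lintegral_swap_update ν i hHm
      _ = ∫⁻ ω, (‖A (Function.update ω.1.1 i ω.1.2) ω.2.2 ω.2.1
            - condScore d α ω.2.1 ω.1.2 ω.2.2‖₊ : ℝ≥0∞) ^ 2 ∂(rhoM d N α τ ν) := by
          rw [lintegral_rhoM (hGm i), pairLaw]
  -- stability identity
  have hstabeq : ∀ i : Fin N, ∫⁻ ω,
      (‖(A ω.1.1 ω.2.2 ω.2.1 - condScore d α ω.2.1 ω.1.2 ω.2.2)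
        - (A (Function.update ω.1.1 i ω.1.2) ω.2.2 ω.2.1
          - condScore d α ω.2.1 ω.1.2 ω.2.2)‖₊ : ℝ≥0∞) ^ 2 ∂(rhoM d N α τ ν)
      = stabGap d N α τ ν A i := by
    intro i
    rw [lintegral_rhoM (by exact hFm.sub (hGm i))]
    unfold stabGap
    congr 1; funext q
    congr 1; funext t
    congr 1; funext y
    rw [sub_sub_sub_cancel_right]
  -- per-coordinate triangle inequalities
  have h1 : ∀ i : Fin N,
      (∫⁻ ω, (‖A ω.1.1 ω.2.2 ω.2.1 - condScore d α ω.2.1 ω.1.2 ω.2.2‖₊ : ℝ≥0∞) ^ 2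
        ∂(rhoM d N α τ ν)) ^ ((1:ℝ)/2)
      ≤ (∫⁻ ω, (‖A (Function.update ω.1.1 i ω.1.2) ω.2.2 ω.2.1
          - condScore d α ω.2.1 ω.1.2 ω.2.2‖₊ : ℝ≥0∞) ^ 2 ∂(rhoM d N α τ ν)) ^ ((1:ℝ)/2)
        + (∫⁻ ω, (‖(A ω.1.1 ω.2.2 ω.2.1 - condScore d α ω.2.1 ω.1.2 ω.2.2)
            - (A (Function.update ω.1.1 i ω.1.2) ω.2.2 ω.2.1
              - condScore d α ω.2.1 ω.1.2 ω.2.2)‖₊ : ℝ≥0∞) ^ 2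
            ∂(rhoM d N α τ ν)) ^ ((1:ℝ)/2) :=
    fun i => sqrt_lintegral_triangle (rhoM d N α τ ν) hFm (hGm i)
  have h2 : ∀ i : Fin N,
      (∫⁻ ω, (‖A (Function.update ω.1.1 i ω.1.2) ω.2.2 ω.2.1
          - condScore d α ω.2.1 ω.1.2 ω.2.2‖₊ : ℝ≥0∞) ^ 2 ∂(rhoM d N α τ ν)) ^ ((1:ℝ)/2)
      ≤ (∫⁻ ω, (‖A ω.1.1 ω.2.2 ω.2.1 - condScore d α ω.2.1 ω.1.2 ω.2.2‖₊ : ℝ≥0∞) ^ 2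
          ∂(rhoM d N α τ ν)) ^ ((1:ℝ)/2)
        + (∫⁻ ω, (‖(A ω.1.1 ω.2.2 ω.2.1 - condScore d α ω.2.1 ω.1.2 ω.2.2)
            - (A (Function.update ω.1.1 i ω.1.2) ω.2.2 ω.2.1
              - condScore d α ω.2.1 ω.1.2 ω.2.2)‖₊ : ℝ≥0∞) ^ 2
            ∂(rhoM d N α τ ν)) ^ ((1:ℝ)/2) := by
    intro i
    have htri := sqrt_lintegral_triangle (rhoM d N α τ ν) (hGm i) hFm
    have hrev : ∫⁻ ω, (‖(A (Function.update ω.1.1 i ω.1.2) ω.2.2 ω.2.1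
          - condScore d α ω.2.1 ω.1.2 ω.2.2)
        - (A ω.1.1 ω.2.2 ω.2.1 - condScore d α ω.2.1 ω.1.2 ω.2.2)‖₊ : ℝ≥0∞) ^ 2
          ∂(rhoM d N α τ ν)
        = ∫⁻ ω, (‖(A ω.1.1 ω.2.2 ω.2.1 - condScore d α ω.2.1 ω.1.2 ω.2.2)
            - (A (Function.update ω.1.1 i ω.1.2) ω.2.2 ω.2.1
              - condScore d α ω.2.1 ω.1.2 ω.2.2)‖₊ : ℝ≥0∞) ^ 2 ∂(rhoM d N α τ ν) :=
      lintegral_congr fun ω => by rw [← nnnorm_neg, neg_sub]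
    rwa [hrev] at htri
  have hc' : ∀ i : Fin N, (∫⁻ ω,
      (‖(A ω.1.1 ω.2.2 ω.2.1 - condScore d α ω.2.1 ω.1.2 ω.2.2)
        - (A (Function.update ω.1.1 i ω.1.2) ω.2.2 ω.2.1
          - condScore d α ω.2.1 ω.1.2 ω.2.2)‖₊ : ℝ≥0∞) ^ 2 ∂(rhoM d N α τ ν))
      ≤ ENNReal.ofReal (εstab ^ 2) := fun i => (hstabeq i).symm ▸ hstab i
  obtain ⟨HA, HB⟩ := final_algebra hN
    (∫⁻ ω, (‖A ω.1.1 ω.2.2 ω.2.1 - condScore d α ω.2.1 ω.1.2 ω.2.2‖₊ : ℝ≥0∞) ^ 2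
      ∂(rhoM d N α τ ν))
    (fun i => ∫⁻ ω, (‖A (Function.update ω.1.1 i ω.1.2) ω.2.2 ω.2.1
      - condScore d α ω.2.1 ω.1.2 ω.2.2‖₊ : ℝ≥0∞) ^ 2 ∂(rhoM d N α τ ν))
    (fun i => ∫⁻ ω, (‖(A ω.1.1 ω.2.2 ω.2.1 - condScore d α ω.2.1 ω.1.2 ω.2.2)
      - (A (Function.update ω.1.1 i ω.1.2) ω.2.2 ω.2.1
        - condScore d α ω.2.1 ω.1.2 ω.2.2)‖₊ : ℝ≥0∞) ^ 2 ∂(rhoM d N α τ ν))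
    εstab hε.le h1 h2 hc'
  constructor
  · rw [hpop, hemp]; exact HA
  · rw [hpop, hemp]; exact HB

end
end

section
/- (Wang's Harnack inequality for the Ornstein–Uhlenbeck kernel.) Fix t ∈ (0,T] and let μ_t, σ_t be as defined below. For every Borel measurable φ : ℝ^d → [0,∞), every p > 1, and every x, y ∈ ℝ^d: ∫ φ(z) φ_t(z|x) dz ≤ ( ∫ φ(z)^p φ_t(z|y) dz )^{1/p} · exp( μ_t² ‖x − y‖² / (2 (p−1) σ_t²) ). -/
open MeasureTheory Real ENNReal

noncomputable section

/-- Normalization of the Gaussian density on `Euc d`. -/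
lemma gauss_lintegral_one (d : ℕ) {s : ℝ} (hs : 0 < s) (c : Euc d) :
    (∫⁻ z : Euc d, ENNReal.ofReal
        ((2 * Real.pi * s) ^ (-(d : ℝ) / 2) * Real.exp (-‖z - c‖ ^ 2 / (2 * s))) ∂volume) = 1 := by
  have hb : (0:ℝ) < (2*s)⁻¹ := by positivity
  have h1 : (∫⁻ z : Euc d, ENNReal.ofReal
        ((2 * Real.pi * s) ^ (-(d : ℝ) / 2) * Real.exp (-‖z - c‖ ^ 2 / (2 * s))) ∂volume)
      = ∫⁻ z : Euc d, ENNReal.ofReal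
        ((2 * Real.pi * s) ^ (-(d : ℝ) / 2) * Real.exp (-‖z‖ ^ 2 / (2 * s))) ∂volume :=
    lintegral_sub_right_eq_self
      (fun z => ENNReal.ofReal ((2 * Real.pi * s) ^ (-(d : ℝ) / 2)
        * Real.exp (-‖z‖ ^ 2 / (2 * s)))) c
  rw [h1]
  have hexp : ∀ z : Euc d, -‖z‖ ^ 2 / (2 * s) = -((2*s)⁻¹) * ‖z‖^2 := by
    intro z; field_simp
  have hint : Integrable (fun z : Euc d => Real.exp (-((2*s)⁻¹) * ‖z‖^2)) := by
    have h := (GaussianFourier.integrable_cexp_neg_mul_sq_norm_add (V := Euc d)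
      (b := ((2*s)⁻¹ : ℂ)) (by simpa using hb) 0 0).re
    simpa [← Complex.ofReal_inv, ← Complex.ofReal_ofNat, ← Complex.ofReal_pow,
      ← Complex.ofReal_mul, ← Complex.ofReal_neg, Complex.exp_ofReal_re] using h
  have hC : (0:ℝ) ≤ (2 * Real.pi * s) ^ (-(d : ℝ) / 2) := by positivity
  calc (∫⁻ z : Euc d, ENNReal.ofReal ((2 * Real.pi * s) ^ (-(d : ℝ) / 2)
          * Real.exp (-‖z‖ ^ 2 / (2 * s))) ∂volume)
      = ∫⁻ z : Euc d, ENNReal.ofReal ((2 * Real.pi * s) ^ (-(d : ℝ) / 2))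
          * ENNReal.ofReal (Real.exp (-((2*s)⁻¹) * ‖z‖^2)) ∂volume := by
        congr 1; funext z
        rw [hexp z, ENNReal.ofReal_mul hC]
    _ = ENNReal.ofReal ((2 * Real.pi * s) ^ (-(d : ℝ) / 2))
          * ENNReal.ofReal (∫ z : Euc d, Real.exp (-((2*s)⁻¹) * ‖z‖^2)) := by
        rw [lintegral_const_mul' _ _ ENNReal.ofReal_ne_top,
          ← ofReal_integral_eq_lintegral_ofReal hint
            (Filter.Eventually.of_forall fun z => (Real.exp_pos _).le)]
    _ = 1 := by
        rw [GaussianFourier.integral_rexp_neg_mul_sq_norm hb,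
          ← ENNReal.ofReal_mul hC]
        have hd : (Module.finrank ℝ (Euc d) : ℝ) = d := by
          rw [finrank_euclideanSpace_fin]
        rw [hd]
        have hpi : Real.pi / (2*s)⁻¹ = 2 * Real.pi * s := by field_simp
        rw [hpi]
        have : (2 * Real.pi * s) ^ (-(d : ℝ) / 2) * (2 * Real.pi * s) ^ ((d : ℝ) / 2) = 1 := by
          rw [← Real.rpow_add (by positivity), ← add_div]
          simp
        rw [this, ENNReal.ofReal_one]

/-- Parallelogram-type identity used in Wang's Harnack inequality. -/
lemma vec_id (d : ℕ) (q : ℝ) (u w : Euc d) :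
    q * ‖u‖^2 - (q-1) * ‖w‖^2 = ‖q•u - (q-1)•w‖^2 - q*(q-1)*‖u - w‖^2 := by
  simp only [← real_inner_self_eq_norm_sq, inner_sub_left, inner_sub_right,
    real_inner_smul_left, real_inner_smul_right, real_inner_comm w u]
  ring

/-- Scalar algebra for the exponent manipulation. -/
lemma alg_key (γ A B Cn R s p q : ℝ) (hs : s ≠ 0) (hp1 : p - 1 ≠ 0)
    (hqp : q / p = q - 1) (hq1 : q - 1 = 1 / (p-1))
    (h1 : q*A - (q-1)*B = Cn - q*(q-1)*R) :
    (γ - A/(2*s) - (γ - B/(2*s))/p) * q = γ - Cn/(2*s) + q * (R/(2*(p-1)*s)) := by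
  have e1 : (γ - A/(2*s) - (γ - B/(2*s))/p) * q
      = γ*(q - q/p) - (q*A - (q/p)*B)/(2*s) := by ring
  rw [e1, hqp, h1]
  have e2 : q - (q-1) = 1 := by ring
  rw [e2, hq1]
  field_simp
  ring

/-- Wang's Harnack inequality for the OU kernel. For any `t ∈ (0,T]`,
Borel measurable `φ : ℝ^d → [0,∞)`, `p > 1` and `x, y ∈ ℝ^d`:
`∫ φ(z) φ_t(z|x) dz ≤ (∫ φ(z)^p φ_t(z|y) dz)^{1/p} exp(μ_t² ‖x−y‖² / (2(p−1)σ_t²))`. -/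
theorem wang_harnack_ou
    (d : ℕ) (α T t : ℝ) (hα : 0 ≤ α) (hT : 0 < T) (ht : 0 < t) (htT : t ≤ T)
    (φ : Euc d → ℝ) (hφmeas : Measurable φ) (hφ0 : ∀ z, 0 ≤ φ z)
    (p : ℝ) (hp : 1 < p) (x y : Euc d) :
    (∫⁻ z, ENNReal.ofReal (φ z * ouKernel d α t x z) ∂volume)
      ≤ (∫⁻ z, ENNReal.ofReal (φ z ^ p * ouKernel d α t y z) ∂volume) ^ (1 / p)
        * ENNReal.ofReal
            (Real.exp (muOU α t ^ 2 * ‖x - y‖ ^ 2 / (2 * (p - 1) * sigSq α t))) := by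
  -- positivity of the variance
  have hs : 0 < sigSq α t := by
    unfold sigSq
    split_ifs with h
    · have h1 : Real.exp (-(2*α*t)) < 1 := by
        rw [Real.exp_lt_one_iff]; nlinarith
      exact div_pos (by linarith) h
    · linarith
  set s := sigSq α t with hsdef
  have hm : 0 < muOU α t := Real.exp_pos _
  set m := muOU α t with hmdef
  set D := m ^ 2 * ‖x - y‖ ^ 2 / (2 * (p - 1) * s) with hDdef
  -- basic exponent facts
  have hp0 : (0:ℝ) < p := lt_trans one_pos hp
  have hp1 : p - 1 ≠ 0 := by intro h; nlinarith
  have hpq : p.HolderConjugate (p/(p-1)) := Real.HolderConjugate.conjExponent hp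
  set q := p/(p-1) with hqdef
  have hq0 : 0 < q := hpq.symm.pos
  have hqp : q / p = q - 1 := by rw [hqdef]; field_simp; ring
  have hq1 : q - 1 = 1 / (p-1) := by rw [hqdef]; field_simp; ring
  -- log-density formulation
  set γ := Real.log (2 * Real.pi * s) * (-(d:ℝ)/2) with hγdef
  have hCγ : (2 * Real.pi * s) ^ (-(d : ℝ) / 2) = Real.exp γ :=
    Real.rpow_def_of_pos (by positivity) _
  have hK : ∀ (u z : Euc d), ouKernel d α t u z
      = Real.exp (γ - ‖z - m • u‖ ^ 2 / (2 * s)) := by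
    intro u z
    unfold ouKernel
    rw [← hsdef, ← hmdef, hCγ, ← Real.exp_add]
    congr 1
    ring
  -- Hölder decomposition
  set f : Euc d → ℝ≥0∞ := fun z =>
    ENNReal.ofReal (φ z * Real.exp ((γ - ‖z - m • y‖ ^ 2 / (2 * s)) / p)) with hfdef
  set g : Euc d → ℝ≥0∞ := fun z =>
    ENNReal.ofReal (Real.exp ((γ - ‖z - m • x‖ ^ 2 / (2 * s))
      - (γ - ‖z - m • y‖ ^ 2 / (2 * s)) / p)) with hgdef
  have hGc : Continuous fun z : Euc d => γ - ‖z - m • y‖ ^ 2 / (2 * s) :=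
    continuous_const.sub (((continuous_id.sub continuous_const).norm.pow 2).div_const _)
  have hFc : Continuous fun z : Euc d => γ - ‖z - m • x‖ ^ 2 / (2 * s) :=
    continuous_const.sub (((continuous_id.sub continuous_const).norm.pow 2).div_const _)
  have hf : AEMeasurable f volume := by
    apply Measurable.aemeasurable
    exact (hφmeas.mul (Real.continuous_exp.comp (hGc.div_const p)).measurable).ennreal_ofReal
  have hg : AEMeasurable g volume := by
    apply Measurable.aemeasurable
    exact (Real.continuous_exp.comp (hFc.sub (hGc.div_const p))).measurable.ennreal_ofReal
  have step1 : (∫⁻ z, ENNReal.ofReal (φ z * ouKernel d α t x z) ∂volume)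
      = ∫⁻ z, (f * g) z ∂volume := by
    apply lintegral_congr
    intro z
    show ENNReal.ofReal (φ z * ouKernel d α t x z) = f z * g z
    rw [hK x z, hfdef, hgdef]
    rw [← ENNReal.ofReal_mul (mul_nonneg (hφ0 z) (Real.exp_pos _).le)]
    congr 1
    rw [mul_assoc, ← Real.exp_add]
    congr 2
    ring
  have holder := ENNReal.lintegral_mul_le_Lp_mul_Lq volume hpq hf hg
  have step2 : (∫⁻ z, f z ^ p ∂volume)
      = ∫⁻ z, ENNReal.ofReal (φ z ^ p * ouKernel d α t y z) ∂volume := by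
    apply lintegral_congr
    intro z
    rw [hK y z, hfdef]
    rw [ENNReal.ofReal_rpow_of_nonneg (mul_nonneg (hφ0 z) (Real.exp_pos _).le) hp0.le]
    congr 1
    rw [Real.mul_rpow (hφ0 z) (Real.exp_pos _).le, ← Real.exp_mul,
      div_mul_cancel₀ _ (ne_of_gt hp0)]
  -- the Gaussian computation for the second factor
  set c : Euc d := q • (m • x) - (q-1) • (m • y) with hcdef
  have key : ∀ z : Euc d,
      ((γ - ‖z - m • x‖ ^ 2 / (2 * s)) - (γ - ‖z - m • y‖ ^ 2 / (2 * s)) / p) * q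
        = (γ - ‖z - c‖ ^ 2 / (2 * s)) + q * D := by
    intro z
    have hvec1 : q • (z - m • x) - (q-1) • (z - m • y) = z - c := by
      rw [hcdef]; module
    have hvec2 : (z - m • x) - (z - m • y) = m • (y - x) := by module
    have h1 := vec_id d q (z - m • x) (z - m • y)
    rw [hvec1, hvec2] at h1
    have h2 : ‖m • (y - x)‖ ^ 2 = m ^ 2 * ‖x - y‖ ^ 2 := by
      rw [norm_smul, Real.norm_eq_abs, abs_of_pos hm, mul_pow, norm_sub_rev]
    rw [h2] at h1
    have := alg_key γ (‖z - m • x‖ ^ 2) (‖z - m • y‖ ^ 2) (‖z - c‖ ^ 2)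
      (m ^ 2 * ‖x - y‖ ^ 2) s p q (ne_of_gt hs) hp1 hqp hq1 h1
    rw [this, hDdef]
  have step3 : (∫⁻ z, g z ^ q ∂volume) = ENNReal.ofReal (Real.exp (q * D)) := by
    have hpt : ∀ z : Euc d, g z ^ q
        = ENNReal.ofReal ((2 * Real.pi * s) ^ (-(d : ℝ) / 2)
            * Real.exp (-‖z - c‖ ^ 2 / (2 * s)))
          * ENNReal.ofReal (Real.exp (q * D)) := by
      intro z
      rw [hgdef]
      rw [ENNReal.ofReal_rpow_of_pos (Real.exp_pos _), ← Real.exp_mul, key z,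
        Real.exp_add, ENNReal.ofReal_mul (Real.exp_pos _).le]
      congr 2
      rw [hCγ, ← Real.exp_add]
      congr 1
      ring
    rw [lintegral_congr hpt, lintegral_mul_const' _ _ ENNReal.ofReal_ne_top,
      gauss_lintegral_one d hs c, one_mul]
  have step4 : (∫⁻ z, g z ^ q ∂volume) ^ (1/q) = ENNReal.ofReal (Real.exp D) := by
    rw [step3, ENNReal.ofReal_rpow_of_pos (Real.exp_pos _), ← Real.exp_mul,
      mul_one_div, mul_div_cancel_left₀ D (ne_of_gt hq0)]
  calc (∫⁻ z, ENNReal.ofReal (φ z * ouKernel d α t x z) ∂volume)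
      = ∫⁻ z, (f * g) z ∂volume := step1
    _ ≤ (∫⁻ z, f z ^ p ∂volume) ^ (1/p) * (∫⁻ z, g z ^ q ∂volume) ^ (1/q) := holder
    _ = (∫⁻ z, ENNReal.ofReal (φ z ^ p * ouKernel d α t y z) ∂volume) ^ (1/p)
        * ENNReal.ofReal (Real.exp D) := by rw [step2, step4]
end
end
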